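/- arXiv:2402.02672 — 2 statements merged into one kernel-verified Lean document; each statement's English description precedes it below -/
import Mathlib

section
/- Let (Ω, 𝒜, P) be a probability space, X : Ω → ℝ^m a measurable map, and 𝒢 = σ(X) the σ-algebra generated by X. For x ∈ ℝ^m write x̄ = (1, x₁, …, x_m) ∈ ℝ^{m+1}. Let β ∈ ℝ^{m+1}, h, q, δh, δq : ℝ^m → ℝ Borel measurable, z, y : Ω → ℝ measurable, and define η = z − h∘X and ε = y − q∘X − ⟨x̄(X), β⟩·(z − h∘X). Assume η is integrable with E[η | 𝒢] = 0 a.e., ε is integrable with E[ε | 𝒢] = 0 a.e., and for each j ∈ {0,…,m} the following are integrable: x̄(X)_j·η·ε, x̄(X)_j·δh(X)·ε, x̄(X)_j·δq(X)·η, x̄(X)_j·⟨x̄(X),β⟩·δh(X)·η, x̄(X)_j·δh(X)·δq(X), and x̄(X)_j·⟨x̄(X),β⟩·δh(X)². For r ∈ ℝ define the perturbed score component ψ_j(r) = x̄(X)_j·(z − h(X) − r·δh(X))·(y − q(X) − r·δq(X) − ⟨x̄(X), β⟩·(z − h(X) − r·δh(X))). Then for every j, the function r ↦ E[ψ_j(r)]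 has derivative 0 at r = 0. -/
open MeasureTheory

lemma dml_cons_measurable {m : ℕ} (j : Fin (m + 1)) :
    Measurable (fun x : Fin m → ℝ => (Fin.cons (1 : ℝ) x : Fin (m + 1) → ℝ) j) := by
  induction j using Fin.cases with
  | zero => simpa using measurable_const
  | succ i => simpa using measurable_pi_apply i

lemma dml_integral_mul_zero {Ω : Type*} [MeasurableSpace Ω] (P : Measure Ω)
    [IsProbabilityMeasure P] {α : Type*} [MeasurableSpace α]
    (X : Ω → α) (hX : Measurable X)
    (g : α → ℝ) (hg : Measurable g) (e : Ω → ℝ) (he : Integrable e P)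
    (hc : P[e | MeasurableSpace.comap X inferInstance] =ᵐ[P] 0)
    (hprod : Integrable (fun ω => g (X ω) * e ω) P) :
    ∫ ω, g (X ω) * e ω ∂P = 0 := by
  have hm : MeasurableSpace.comap X inferInstance ≤ ‹MeasurableSpace Ω› :=
    measurable_iff_comap_le.mp hX
  haveI : SigmaFinite (P.trim hm) := inferInstance
  have hgX : StronglyMeasurable[MeasurableSpace.comap X inferInstance]
      (fun ω => g (X ω)) := ((hg.comp (comap_measurable X))).stronglyMeasurable
  have h1 : P[(fun ω => g (X ω)) * e | MeasurableSpace.comap X inferInstance]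
      =ᵐ[P] (fun ω => g (X ω)) * P[e | MeasurableSpace.comap X inferInstance] :=
    condExp_mul_of_stronglyMeasurable_left hgX hprod he
  calc ∫ ω, g (X ω) * e ω ∂P
      = ∫ ω, (P[(fun ω => g (X ω)) * e | MeasurableSpace.comap X inferInstance]) ω ∂P :=
        (integral_condExp hm).symm
    _ = 0 := by
        rw [integral_congr_ae (h1.trans ?_), integral_zero]
        filter_upwards [hc] with ω hω
        simp [hω]

/-- Neyman orthogonality of the double-machine-learning score with the linear CATE model:
the Gateaux derivative of the expected score in the direction of arbitrary perturbations
`(δq, δh)` of the nuisance functions `(q, h)` vanishes at `r = 0`.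
Here `x̄ x = (1, x₁, …, x_m)`, `η = z − h∘X` and
`ε = y − q∘X − ⟨x̄(X), β⟩·(z − h∘X)`. -/
theorem dml_neyman_orthogonality
    {Ω : Type*} [MeasurableSpace Ω] (P : Measure Ω) [IsProbabilityMeasure P]
    (m : ℕ) (X : Ω → (Fin m → ℝ)) (hX : Measurable X)
    (β : Fin (m + 1) → ℝ)
    (h q δh δq : (Fin m → ℝ) → ℝ)
    (hh : Measurable h) (hq : Measurable q) (hδh : Measurable δh) (hδq : Measurable δq)
    (z y : Ω → ℝ) (hz : Measurable z) (hy : Measurable y)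
    (η ε : Ω → ℝ)
    (hη : η = fun ω => z ω - h (X ω))
    (hε : ε = fun ω => y ω - q (X ω) -
      (∑ k, (Fin.cons (1 : ℝ) (X ω) : Fin (m + 1) → ℝ) k * β k) * (z ω - h (X ω)))
    (hη_int : Integrable η P)
    (hη_cond : P[η | MeasurableSpace.comap X inferInstance] =ᵐ[P] 0)
    (hε_int : Integrable ε P)
    (hε_cond : P[ε | MeasurableSpace.comap X inferInstance] =ᵐ[P] 0)
    (hint1 : ∀ j : Fin (m + 1),
      Integrable (fun ω => (Fin.cons (1 : ℝ) (X ω) : Fin (m + 1) → ℝ) j * (η ω * ε ω)) P)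
    (hint2 : ∀ j : Fin (m + 1),
      Integrable (fun ω => (Fin.cons (1 : ℝ) (X ω) : Fin (m + 1) → ℝ) j *
        (δh (X ω) * ε ω)) P)
    (hint3 : ∀ j : Fin (m + 1),
      Integrable (fun ω => (Fin.cons (1 : ℝ) (X ω) : Fin (m + 1) → ℝ) j *
        (δq (X ω) * η ω)) P)
    (hint4 : ∀ j : Fin (m + 1),
      Integrable (fun ω => (Fin.cons (1 : ℝ) (X ω) : Fin (m + 1) → ℝ) j *
        ((∑ k, (Fin.cons (1 : ℝ) (X ω) : Fin (m + 1) → ℝ) k * β k) *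
          (δh (X ω) * η ω))) P)
    (hint5 : ∀ j : Fin (m + 1),
      Integrable (fun ω => (Fin.cons (1 : ℝ) (X ω) : Fin (m + 1) → ℝ) j *
        (δh (X ω) * δq (X ω))) P)
    (hint6 : ∀ j : Fin (m + 1),
      Integrable (fun ω => (Fin.cons (1 : ℝ) (X ω) : Fin (m + 1) → ℝ) j *
        ((∑ k, (Fin.cons (1 : ℝ) (X ω) : Fin (m + 1) → ℝ) k * β k) *
          (δh (X ω))^2)) P) :
    ∀ j : Fin (m + 1),
      HasDerivAt (fun r : ℝ =>
        ∫ ω, (Fin.cons (1 : ℝ) (X ω) : Fin (m + 1) → ℝ) j *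
          ((z ω - h (X ω) - r * δh (X ω)) *
            (y ω - q (X ω) - r * δq (X ω) -
              (∑ k, (Fin.cons (1 : ℝ) (X ω) : Fin (m + 1) → ℝ) k * β k) *
                (z ω - h (X ω) - r * δh (X ω)))) ∂P) 0 0 := by
  intro j
  set xb : Ω → ℝ := fun ω => (Fin.cons (1 : ℝ) (X ω) : Fin (m + 1) → ℝ) j with hxb
  set θ : Ω → ℝ := fun ω => ∑ k, (Fin.cons (1 : ℝ) (X ω) : Fin (m + 1) → ℝ) k * β k with hθ
  set A : Ω → ℝ := fun ω => xb ω * (η ω * ε ω) with hA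
  set B : Ω → ℝ := fun ω => xb ω * (θ ω * (δh (X ω) * η ω)) -
      xb ω * (δq (X ω) * η ω) - xb ω * (δh (X ω) * ε ω) with hB
  set C : Ω → ℝ := fun ω => xb ω * (δh (X ω) * δq (X ω)) -
      xb ω * (θ ω * (δh (X ω))^2) with hC
  have hAint : Integrable A P := hint1 j
  have hBint : Integrable B P := ((hint4 j).sub (hint3 j)).sub (hint2 j)
  have hCint : Integrable C P := (hint5 j).sub (hint6 j)
  -- the expected score is a quadratic polynomial in r
  have key : ∀ r : ℝ, (∫ ω, (Fin.cons (1 : ℝ) (X ω) : Fin (m + 1) → ℝ) j *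
          ((z ω - h (X ω) - r * δh (X ω)) *
            (y ω - q (X ω) - r * δq (X ω) -
              (∑ k, (Fin.cons (1 : ℝ) (X ω) : Fin (m + 1) → ℝ) k * β k) *
                (z ω - h (X ω) - r * δh (X ω)))) ∂P)
        = (∫ ω, A ω ∂P) + (r * ∫ ω, B ω ∂P + r ^ 2 * ∫ ω, C ω ∂P) := by
    intro r
    have hrB : Integrable (fun ω => r * B ω) P := hBint.const_mul r
    have hrC : Integrable (fun ω => r ^ 2 * C ω) P := hCint.const_mul (r ^ 2)
    have hsum : Integrable (fun ω => r * B ω + r ^ 2 * C ω) P := hrB.add hrC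
    have hfun : (fun ω => (Fin.cons (1 : ℝ) (X ω) : Fin (m + 1) → ℝ) j *
          ((z ω - h (X ω) - r * δh (X ω)) *
            (y ω - q (X ω) - r * δq (X ω) -
              (∑ k, (Fin.cons (1 : ℝ) (X ω) : Fin (m + 1) → ℝ) k * β k) *
                (z ω - h (X ω) - r * δh (X ω)))))
        = fun ω => A ω + (r * B ω + r ^ 2 * C ω) := by
      funext ω
      simp only [hA, hB, hC, hxb, hθ, hη, hε]
      ring
    rw [hfun, integral_add hAint hsum, integral_add hrB hrC,
      integral_const_mul, integral_const_mul]
  -- the linear coefficient vanishes by orthogonality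
  have hB0 : ∫ ω, B ω ∂P = 0 := by
    have e1 : ∫ ω, (Fin.cons (1 : ℝ) (X ω) : Fin (m + 1) → ℝ) j * (δq (X ω) * η ω) ∂P
        = 0 := by
      have := dml_integral_mul_zero P X hX
        (fun x => (Fin.cons (1 : ℝ) x : Fin (m + 1) → ℝ) j * δq x)
        ((dml_cons_measurable j).mul hδq) η hη_int hη_cond
        (by simpa [mul_assoc] using hint3 j)
      simpa [mul_assoc] using this
    have e2 : ∫ ω, (Fin.cons (1 : ℝ) (X ω) : Fin (m + 1) → ℝ) j *
          ((∑ k, (Fin.cons (1 : ℝ) (X ω) : Fin (m + 1) → ℝ) k * β k) *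
            (δh (X ω) * η ω)) ∂P = 0 := by
      have := dml_integral_mul_zero P X hX
        (fun x => (Fin.cons (1 : ℝ) x : Fin (m + 1) → ℝ) j *
          ((∑ k, (Fin.cons (1 : ℝ) x : Fin (m + 1) → ℝ) k * β k) * δh x))
        ((dml_cons_measurable j).mul
          ((Finset.measurable_sum _ fun k _ => (dml_cons_measurable k).mul_const (β k)).mul
            hδh)) η hη_int hη_cond
        (by simpa [mul_assoc] using hint4 j)
      simpa [mul_assoc] using this
    have e3 : ∫ ω, (Fin.cons (1 : ℝ) (X ω) : Fin (m + 1) → ℝ) j * (δh (X ω) * ε ω) ∂P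
        = 0 := by
      have := dml_integral_mul_zero P X hX
        (fun x => (Fin.cons (1 : ℝ) x : Fin (m + 1) → ℝ) j * δh x)
        ((dml_cons_measurable j).mul hδh) ε hε_int hε_cond
        (by simpa [mul_assoc] using hint2 j)
      simpa [mul_assoc] using this
    have h43 : Integrable (fun ω => (Fin.cons (1 : ℝ) (X ω) : Fin (m + 1) → ℝ) j *
        ((∑ k, (Fin.cons (1 : ℝ) (X ω) : Fin (m + 1) → ℝ) k * β k) * (δh (X ω) * η ω)) -
        (Fin.cons (1 : ℝ) (X ω) : Fin (m + 1) → ℝ) j * (δq (X ω) * η ω)) P :=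
      (hint4 j).sub (hint3 j)
    calc ∫ ω, B ω ∂P
        = ∫ ω, ((Fin.cons (1 : ℝ) (X ω) : Fin (m + 1) → ℝ) j *
            ((∑ k, (Fin.cons (1 : ℝ) (X ω) : Fin (m + 1) → ℝ) k * β k) *
              (δh (X ω) * η ω)) -
            (Fin.cons (1 : ℝ) (X ω) : Fin (m + 1) → ℝ) j * (δq (X ω) * η ω)) -
            (Fin.cons (1 : ℝ) (X ω) : Fin (m + 1) → ℝ) j * (δh (X ω) * ε ω) ∂P := rfl
      _ = (∫ ω, (Fin.cons (1 : ℝ) (X ω) : Fin (m + 1) → ℝ) j *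
            ((∑ k, (Fin.cons (1 : ℝ) (X ω) : Fin (m + 1) → ℝ) k * β k) *
              (δh (X ω) * η ω)) -
            (Fin.cons (1 : ℝ) (X ω) : Fin (m + 1) → ℝ) j * (δq (X ω) * η ω) ∂P) -
          ∫ ω, (Fin.cons (1 : ℝ) (X ω) : Fin (m + 1) → ℝ) j * (δh (X ω) * ε ω) ∂P :=
        integral_sub h43 (hint2 j)
      _ = ((∫ ω, (Fin.cons (1 : ℝ) (X ω) : Fin (m + 1) → ℝ) j *
            ((∑ k, (Fin.cons (1 : ℝ) (X ω) : Fin (m + 1) → ℝ) k * β k) *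
              (δh (X ω) * η ω)) ∂P) -
          ∫ ω, (Fin.cons (1 : ℝ) (X ω) : Fin (m + 1) → ℝ) j * (δq (X ω) * η ω) ∂P) -
          ∫ ω, (Fin.cons (1 : ℝ) (X ω) : Fin (m + 1) → ℝ) j * (δh (X ω) * ε ω) ∂P := by
        rw [integral_sub (hint4 j) (hint3 j)]
      _ = 0 := by rw [e1, e2, e3]; ring
  -- conclude
  have hpoly : HasDerivAt (fun r : ℝ => (∫ ω, A ω ∂P) +
      (r * ∫ ω, B ω ∂P + r ^ 2 * ∫ ω, C ω ∂P)) 0 0 := by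
    have h1 : HasDerivAt (fun r : ℝ => (∫ ω, A ω ∂P) +
        (r * ∫ ω, B ω ∂P + r ^ 2 * ∫ ω, C ω ∂P))
        (0 + (1 * (∫ ω, B ω ∂P) + ((2 : ℕ) * (0:ℝ) ^ (2 - 1)) * (∫ ω, C ω ∂P))) 0 :=
      (hasDerivAt_const 0 _).add
        (((hasDerivAt_id 0).mul_const _).add ((hasDerivAt_pow 2 0).mul_const _))
    simpa [hB0] using h1
  exact (funext key) ▸ hpoly
end

section
/- Fix m ≥ 1, m̌ ≥ 1, n ≥ 1, μ ∈ ℝ^m, data points x₁,…,x_n ∈ ℝ^m and real numbers ζ̂₁,…,ζ̂_n, η̂₁,…,η̂_n. Let t, s : ℝ^{m+1} → ℝ^{m+1} be defined by (t β)₀ = β₀ + Σ_j μ_j·β_j, (t β)_j = β_j, and (s γ)₀ = γ₀ − Σ_j μ_j·γ_j, (s γ)_j = γ_j (1 ≤ j ≤ m). Define f(β) = Σ_i (ζ̂_i − η̂_i·(β₀ + Σ_j x_{ij}·β_j))² and g(γ) = Σ_i (ζ̂_i − η̂_i·(γ₀ + Σ_j (x_{ij} − μ_j)·γ_j))². Suppose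 β_CA ∈ ℝ^{m+1} is the unique global minimizer of f. Let M be any real (m+1) × m̌ matrix such that t(β_CA) lies in the column space of M, and let γ̌ ∈ ℝ^{m̌} be a global minimizer of the function γ' ↦ g(M γ'). Then M γ̌ = t(β_CA), and hence the user-side coefficients β_k := s(M γ̌) equal the centralized-analysis coefficients β_CA. -/
/-- Abstract least-squares core of the correctness theorem for DC-DML: if `β_CA` is the
unique global minimizer of the centralized least-squares objective `f`, the reparametrized
vector `t β_CA` lies in the column space of the matrix `M`, and `γc` globally minimizes
`γ' ↦ g (M γ')` where `g` is the objective in the mean-shifted coordinates, then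
`M γc = t β_CA`, and hence the user-side coefficients `s (M γc)` equal `β_CA`. -/
theorem dcdml_correctness_core
    (m mc n : ℕ) (hm : 1 ≤ m) (hmc : 1 ≤ mc) (hn : 1 ≤ n) (μ : Fin m → ℝ)
    (x : Fin n → Fin m → ℝ) (ζ η : Fin n → ℝ)
    (t s : (Fin (m + 1) → ℝ) → (Fin (m + 1) → ℝ))
    (ht0 : ∀ β, t β 0 = β 0 + ∑ j, μ j * β j.succ)
    (hts : ∀ β (j : Fin m), t β j.succ = β j.succ)
    (hs0 : ∀ γ, s γ 0 = γ 0 - ∑ j, μ j * γ j.succ)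
    (hss : ∀ γ (j : Fin m), s γ j.succ = γ j.succ)
    (f g : (Fin (m + 1) → ℝ) → ℝ)
    (hf : f = fun β => ∑ i, (ζ i - η i * (β 0 + ∑ j, x i j * β j.succ)) ^ 2)
    (hg : g = fun γ => ∑ i, (ζ i - η i * (γ 0 + ∑ j, (x i j - μ j) * γ j.succ)) ^ 2)
    (βCA : Fin (m + 1) → ℝ)
    (hmin : ∀ β', f βCA ≤ f β')
    (huniq : ∀ β', (∀ β'', f β' ≤ f β'') → β' = βCA)
    (M : Matrix (Fin (m + 1)) (Fin mc) ℝ)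
    (hrange : ∃ γ' : Fin mc → ℝ, M.mulVec γ' = t βCA)
    (γc : Fin mc → ℝ)
    (hγc : ∀ γ' : Fin mc → ℝ, g (M.mulVec γc) ≤ g (M.mulVec γ')) :
    M.mulVec γc = t βCA ∧ s (M.mulVec γc) = βCA := by
  -- key identity: g γ = f (s γ)
  have key : ∀ γ, g γ = f (s γ) := by
    intro γ
    subst hf hg
    simp only
    refine Finset.sum_congr rfl fun i _ => ?_
    have : γ 0 + ∑ j, (x i j - μ j) * γ j.succ
        = s γ 0 + ∑ j, x i j * s γ j.succ := by
      rw [hs0]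
      simp only [hss, sub_mul]
      rw [Finset.sum_sub_distrib]
      ring
    rw [this]
  -- g (M γc) ≤ f βCA
  obtain ⟨γ', hγ'⟩ := hrange
  have hle : f (s (M.mulVec γc)) ≤ f βCA := by
    rw [← key]
    calc g (M.mulVec γc) ≤ g (M.mulVec γ') := hγc γ'
      _ = f (s (t βCA)) := by rw [hγ', key]
      _ = f βCA := by
          congr 1
          funext k
          refine Fin.cases ?_ (fun j => ?_) k
          · rw [hs0, ht0]; simp only [hts]; ring
          · rw [hss, hts]
  have heq : s (M.mulVec γc) = βCA :=
    huniq _ (fun β'' => hle.trans (hmin β''))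
  have hMγ : M.mulVec γc = t βCA := by
    have hts' : t (s (M.mulVec γc)) = M.mulVec γc := by
      funext k
      refine Fin.cases ?_ (fun j => ?_) k
      · rw [ht0, hs0]; simp only [hss]; ring
      · rw [hts, hss]
    rw [← hts', heq]
  exact ⟨hMγ, heq⟩
end
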